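/- arXiv:1408.7003 — 5 statements merged into one kernel-verified Lean document; each statement's English description precedes it below -/
import Mathlib

section
/- Let C be a category with terminal object 1, let (E, M) be an orthogonal factorization system on C, and let R : C → C denote the reflection functor obtained by factoring terminal morphisms: RX is the middle object of the (E, M)-factorization X → RX → 1, and for f : X → Y the morphism Rf : RX → RY is the unique morphism with Rf ∘ e_X = e_Y ∘ f (obtained from orthogonality of e_X ∈ E against RY → 1 ∈ M). Then E is a 3-for-2 class if and only if E equals the class of morphisms f such that Rf is an isomorphism. -/
open CategoryTheory CategoryTheory.Limits

universe v u

/-- An orthogonal factorization system `(E, M)` on a category `C`. -/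
structure OFS (C : Type u) [Category.{v} C] where
  E : MorphismProperty C
  M : MorphismProperty C
  respectsIso_E : E.RespectsIso
  respectsIso_M : M.RespectsIso
  fac : ∀ {X Y : C} (f : X ⟶ Y), ∃ (Z : C) (e : X ⟶ Z) (m : Z ⟶ Y), E e ∧ M m ∧ e ≫ m = f
  orth : ∀ {A B X Y : C} {e : A ⟶ B} {m : X ⟶ Y}, E e → M m →
    ∀ (u : A ⟶ X) (v : B ⟶ Y), u ≫ m = e ≫ v → ∃! d : B ⟶ X, e ≫ d = u ∧ d ≫ m = v

/-- A 3-for-2 class of morphisms: closed under composition and satisfying both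
cancellation properties. -/
structure IsThreeForTwo {C : Type u} [Category.{v} C] (K : MorphismProperty C) : Prop where
  comp : ∀ {X Y Z : C} (g : X ⟶ Y) (f : Y ⟶ Z), K g → K f → K (g ≫ f)
  cancel_left : ∀ {X Y Z : C} (g : X ⟶ Y) (f : Y ⟶ Z), K g → K (g ≫ f) → K f
  cancel_right : ∀ {X Y Z : C} (g : X ⟶ Y) (f : Y ⟶ Z), K f → K (g ≫ f) → K g

/-- Every isomorphism lies in the left class `E` of an orthogonal factorization system. -/
lemma OFS.iso_mem_E {C : Type u} [Category.{v} C] (fs : OFS C) {X Y : C} (f : X ⟶ Y)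
    [IsIso f] : fs.E f := by
  obtain ⟨Z, e, m, he, hm, hfac⟩ := fs.fac f
  -- show m is an isomorphism with inverse `inv f ≫ e`
  have h1 : m ≫ (inv f ≫ e) = 𝟙 Z := by
    obtain ⟨d, hd, hu⟩ := fs.orth he hm e m rfl
    have hid : 𝟙 Z = d := hu _ ⟨Category.comp_id _, Category.id_comp _⟩
    have h2 : m ≫ inv f ≫ e = d := by
      refine hu _ ⟨?_, ?_⟩
      · rw [← Category.assoc, ← Category.assoc, hfac, IsIso.hom_inv_id, Category.id_comp]
      · rw [Category.assoc, Category.assoc, hfac, IsIso.inv_hom_id, Category.comp_id]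
    rw [h2, ← hid]
  have h2 : (inv f ≫ e) ≫ m = 𝟙 Y := by
    rw [Category.assoc, hfac, IsIso.inv_hom_id]
  have : IsIso m := ⟨inv f ≫ e, h1, h2⟩
  have := fs.respectsIso_E.toRespectsRight.postcomp m (this) e he
  rwa [hfac] at this

/-- Let `(E, M)` be an orthogonal factorization system on a category `C` with terminal
object, and let `R : C ⥤ C` with unit `η : 𝟭 C ⟶ R` be the reflection obtained by
`(E, M)`-factoring terminal morphisms, i.e. `η_X : X ⟶ RX` lies in `E` and `RX ⟶ 1` lies
in `M` (naturality of `η` encodes `Rf ∘ η_X = η_Y ∘ f`, which determines `Rf` uniquely by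
orthogonality). Then `E` is a 3-for-2 class iff `E` is exactly the class of morphisms `f`
such that `Rf` is an isomorphism. -/
theorem OFS.isThreeForTwo_iff_eq_R_inverted {C : Type u} [Category.{v} C] [HasTerminal C]
    (fs : OFS C) (R : C ⥤ C) (η : 𝟭 C ⟶ R)
    (hE : ∀ X : C, fs.E (η.app X))
    (hM : ∀ X : C, fs.M (terminal.from (R.obj X))) :
    IsThreeForTwo fs.E ↔ (∀ {X Y : C} (f : X ⟶ Y), fs.E f ↔ IsIso (R.map f)) := by
  constructor
  · intro h X Y f
    have hnat : η.app X ≫ R.map f = f ≫ η.app Y := (η.naturality f).symm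
    constructor
    · intro hf
      -- R.map f ∈ E by cancellation
      have hRf : fs.E (R.map f) := by
        refine h.cancel_left (η.app X) (R.map f) (hE X) ?_
        rw [hnat]
        exact h.comp f (η.app Y) hf (hE Y)
      -- R.map f is orthogonal to terminal maps in M, hence an iso
      obtain ⟨d, ⟨hd1, _⟩, _⟩ := fs.orth hRf (hM X) (𝟙 (R.obj X)) (terminal.from (R.obj Y))
        (by apply Subsingleton.elim)
      obtain ⟨d', hd', hu'⟩ := fs.orth hRf (hM Y) (R.map f) (terminal.from (R.obj Y))
        (by apply Subsingleton.elim)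
      have e1 : d ≫ R.map f = d' := hu' _ ⟨by rw [← Category.assoc, hd1, Category.id_comp],
        by apply Subsingleton.elim⟩
      have e2 : 𝟙 (R.obj Y) = d' := hu' _ ⟨Category.comp_id _, by apply Subsingleton.elim⟩
      exact ⟨d, hd1, by rw [e1, ← e2]⟩
    · intro hiso
      have h1 : fs.E (η.app X ≫ R.map f) :=
        h.comp _ _ (hE X) (fs.iso_mem_E (R.map f))
      rw [hnat] at h1
      exact h.cancel_right f (η.app Y) (hE Y) h1
  · intro h
    refine ⟨fun g f hg hf => ?_, fun g f hg hgf => ?_, fun g f hf hgf => ?_⟩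
    · rw [h] at hg hf ⊢
      rw [R.map_comp]
      exact IsIso.comp_isIso
    · rw [h] at hg hgf ⊢
      rw [R.map_comp] at hgf
      exact IsIso.of_isIso_comp_left (R.map g) (R.map f)
    · rw [h] at hf hgf ⊢
      rw [R.map_comp] at hgf
      exact IsIso.of_isIso_comp_right (R.map g) (R.map f)
end

section
/- Let C be a category with a zero object 0 equipped with an orthogonal factorization system (E, M), and let S denote the coreflection obtained by (E, M)-factoring initial morphisms 0 → SX → X, with Sf : SX → SY the unique morphism induced by orthogonality for each f : X → Y. Then M equals the class of morphisms f such that Sf is an isomorphism if and only if M is a 3-for-2 class. In this case the torsion-free class { B ∈ C : (B → 0) ∈ M } coincides with { B ∈ C : SB is a zero object } and also with the class of objects B such that Hom(A, B) has exactly one element for every object A with (0 → A) ∈ E. -/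
open CategoryTheory CategoryTheory.Limits

universe v u

section Aux

variable {C : Type u} [Category.{v} C] (fs : OFS C)

/-- Identities belong to `M`. -/
lemma OFS.id_mem_M (X : C) : fs.M (𝟙 X) := by
  obtain ⟨W, e, m, hE, hM, hc⟩ := fs.fac (𝟙 X)
  obtain ⟨d, _, hu⟩ := fs.orth hE hM e m rfl
  have h1 : m ≫ e = 𝟙 W := by
    have ha := hu (m ≫ e) ⟨by rw [← Category.assoc, hc, Category.id_comp],
      by rw [Category.assoc, hc, Category.comp_id]⟩
    have hb := hu (𝟙 W) ⟨Category.comp_id e, Category.id_comp m⟩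
    rw [ha, hb]
  haveI : IsIso m := ⟨e, h1, hc⟩
  haveI := fs.respectsIso_M
  have := MorphismProperty.RespectsIso.precomp fs.M (inv m) m hM
  rwa [IsIso.inv_hom_id] at this

/-- Isomorphisms belong to `M`. -/
lemma OFS.iso_mem_M {X Y : C} (f : X ⟶ Y) [IsIso f] : fs.M f := by
  haveI := fs.respectsIso_M
  have := MorphismProperty.RespectsIso.precomp fs.M f (𝟙 Y) (fs.id_mem_M Y)
  rwa [Category.comp_id] at this

end Aux

/-- Let `C` be a category with zero object `Z`, equipped with an orthogonal factorization
system `(E, M)`, and let `S : C ⥤ C` with counit `σ : S ⟶ 𝟭 C` be the coreflection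
obtained by `(E, M)`-factoring initial morphisms (`0 ⟶ SX` in `E`, `σ_X : SX ⟶ X` in `M`;
naturality of `σ` encodes the induced morphisms `Sf`). Then `M` equals the class of
morphisms `f` with `Sf` invertible iff `M` is a 3-for-2 class; and in this case the
torsion-free class `{B : (B ⟶ 0) ∈ M}` coincides with `{B : SB is a zero object}` and with
the class of `B` such that `A ⟶ B` has exactly one element whenever `(0 ⟶ A) ∈ E`. -/
theorem coreflection_inverts_iff_M_threeForTwo {C : Type u} [Category.{v} C]
    (fs : OFS C) {Z : C} (hZ : IsZero Z)
    (S : C ⥤ C) (σ : S ⟶ 𝟭 C)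
    (hS : ∀ X : C, fs.E (hZ.to_ (S.obj X)) ∧ fs.M (σ.app X)) :
    ((∀ {X Y : C} (f : X ⟶ Y), fs.M f ↔ IsIso (S.map f)) ↔ IsThreeForTwo fs.M) ∧
    (IsThreeForTwo fs.M →
      ∀ B : C,
        (fs.M (hZ.from_ B) ↔ IsZero (S.obj B)) ∧
        (fs.M (hZ.from_ B) ↔ ∀ A : C, fs.E (hZ.to_ A) → Nonempty (Unique (A ⟶ B)))) := by
  -- For any two objects, all morphisms out of `Z` agree.
  have hsrc : ∀ {Y : C} (f g : Z ⟶ Y), f = g := fun f g => hZ.eq_of_src f g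
  have htgt : ∀ {X : C} (f g : X ⟶ Z), f = g := fun f g => hZ.eq_of_tgt f g
  -- If `M` is 3-for-2 and `f ∈ M`, then `S.map f` is an isomorphism.
  have key : ∀ (h32 : IsThreeForTwo fs.M) {X Y : C} (f : X ⟶ Y), fs.M f → IsIso (S.map f) := by
    intro h32 X Y f hf
    have hM' : fs.M (σ.app X ≫ f) := h32.comp _ _ (hS X).2 hf
    have hnat : S.map f ≫ σ.app Y = σ.app X ≫ f := by
      simpa using σ.naturality f
    -- the inverse
    obtain ⟨d, ⟨hd1, hd2⟩, hdu⟩ := fs.orth (hS Y).1 hM'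
      (hZ.to_ (S.obj X)) (σ.app Y) (hsrc _ _)
    refine ⟨d, ?_, ?_⟩
    · -- S.map f ≫ d = 𝟙 via uniqueness of fillers in square (to SX, σX ≫ f)
      obtain ⟨c, _, hcu⟩ := fs.orth (hS X).1 hM' (hZ.to_ (S.obj X)) (σ.app X ≫ f) (hsrc _ _)
      have ha := hcu (S.map f ≫ d) ⟨hsrc _ _, by
        rw [Category.assoc, hd2]; exact hnat⟩
      have hb := hcu (𝟙 _) ⟨by rw [Category.comp_id], Category.id_comp _⟩
      rw [ha, hb]
    · -- d ≫ S.map f = 𝟙 via uniqueness of fillers in square (to SY, σY)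
      obtain ⟨c, _, hcu⟩ := fs.orth (hS Y).1 (hS Y).2 (hZ.to_ (S.obj Y)) (σ.app Y) (hsrc _ _)
      have ha := hcu (d ≫ S.map f) ⟨hsrc _ _, by rw [Category.assoc, hnat, hd2]⟩
      have hb := hcu (𝟙 _) ⟨by rw [Category.comp_id], Category.id_comp _⟩
      rw [ha, hb]
  -- first claimed equivalence of part 2
  have partA : ∀ (h32 : IsThreeForTwo fs.M) (B : C),
      fs.M (hZ.from_ B) ↔ IsZero (S.obj B) := by
    intro h32 B
    constructor
    · intro hB
      have hM' : fs.M (σ.app B ≫ hZ.from_ B) := h32.comp _ _ (hS B).2 hB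
      -- `to (S B) ≫ (σ_B ≫ from B) = 𝟙 Z`, so `to (S B)` is an iso.
      obtain ⟨d, _, hdu⟩ := fs.orth (hS B).1 hM'
        (hZ.to_ (S.obj B)) (σ.app B ≫ hZ.from_ B) (hsrc _ _)
      have h1 : (σ.app B ≫ hZ.from_ B) ≫ hZ.to_ (S.obj B) = 𝟙 (S.obj B) := by
        have ha := hdu ((σ.app B ≫ hZ.from_ B) ≫ hZ.to_ (S.obj B)) ⟨hsrc _ _, by
          have hz : hZ.from_ B ≫ hZ.to_ (S.obj B) ≫ σ.app B ≫ hZ.from_ B = hZ.from_ B :=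
            htgt _ _
          simp only [Category.assoc]; rw [hz]⟩
        have hb := hdu (𝟙 _) ⟨by rw [Category.comp_id], Category.id_comp _⟩
        exact ha.trans hb.symm
      haveI : IsIso (hZ.to_ (S.obj B)) :=
        ⟨σ.app B ≫ hZ.from_ B, htgt _ _, h1⟩
      exact hZ.of_iso (asIso (hZ.to_ (S.obj B))).symm
    · intro hSB
      -- the composite `σ_B ≫ from B : S B ⟶ Z` is an iso between zero objects
      haveI : IsIso (σ.app B ≫ hZ.from_ B) :=
        ⟨hZ.to_ (S.obj B), hSB.eq_of_src _ _, hZ.eq_of_src _ _⟩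
      exact h32.cancel_left _ _ (hS B).2 (fs.iso_mem_M _)
  refine ⟨⟨?_, ?_⟩, ?_⟩
  · -- (∀ f, M f ↔ IsIso (S f)) → 3-for-2
    intro h
    refine ⟨?_, ?_, ?_⟩
    · intro X Y W g f hg hf
      rw [h, S.map_comp]
      exact @IsIso.comp_isIso _ _ _ _ _ _ _ ((h g).mp hg) ((h f).mp hf)
    · intro X Y W g f hg hgf
      rw [h]
      have h1 : IsIso (S.map g ≫ S.map f) := by rw [← S.map_comp]; exact (h _).mp hgf
      haveI : IsIso (S.map g) := (h g).mp hg
      exact IsIso.of_isIso_comp_left (S.map g) (S.map f)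
    · intro X Y W g f hf hgf
      rw [h]
      have h1 : IsIso (S.map g ≫ S.map f) := by rw [← S.map_comp]; exact (h _).mp hgf
      haveI : IsIso (S.map f) := (h f).mp hf
      exact IsIso.of_isIso_comp_right (S.map g) (S.map f)
  · -- 3-for-2 → (∀ f, M f ↔ IsIso (S f))
    intro h32 X Y f
    refine ⟨key h32 f, ?_⟩
    intro hiso
    have hnat : S.map f ≫ σ.app Y = σ.app X ≫ f := by simpa using σ.naturality f
    haveI := fs.respectsIso_M
    have hM' : fs.M (S.map f ≫ σ.app Y) :=
      MorphismProperty.RespectsIso.precomp fs.M (S.map f) (σ.app Y) (hS Y).2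
    rw [hnat] at hM'
    exact h32.cancel_left _ _ (hS X).2 hM'
  · intro h32 B
    refine ⟨partA h32 B, ?_⟩
    constructor
    · intro hB A hA
      obtain ⟨d, _, hdu⟩ := fs.orth hA hB (hZ.to_ B) (hZ.from_ A) (htgt _ _)
      exact ⟨⟨⟨d⟩, fun g => (hdu g ⟨hsrc _ _, htgt _ _⟩).trans
        (hdu d ⟨hsrc _ _, htgt _ _⟩).symm⟩⟩
    · intro h
      obtain ⟨u⟩ := h (S.obj B) (hS B).1
      -- σ_B factors through Z, hence `S B` is a zero object.
      have huniq : ∀ g g' : S.obj B ⟶ B, g = g' := fun g g' =>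
        (u.uniq g).trans (u.uniq g').symm
      obtain ⟨d, _, hdu⟩ := fs.orth (hS B).1 (hS B).2
        (hZ.to_ (S.obj B)) (σ.app B) (hsrc _ _)
      have h1 : hZ.from_ (S.obj B) ≫ hZ.to_ (S.obj B) = 𝟙 (S.obj B) := by
        have ha := hdu (hZ.from_ (S.obj B) ≫ hZ.to_ (S.obj B)) ⟨hsrc _ _, by
          rw [Category.assoc]; exact huniq _ _⟩
        have hb := hdu (𝟙 _) ⟨by rw [Category.comp_id], Category.id_comp _⟩
        exact ha.trans hb.symm
      haveI : IsIso (hZ.to_ (S.obj B)) := ⟨hZ.from_ (S.obj B), htgt _ _, h1⟩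
      exact (partA h32 B).mpr (hZ.of_iso (asIso (hZ.to_ (S.obj B))).symm)
end

section
/- Let C be a category with a zero object, finite limits and finite colimits, equipped with a torsion theory (E, M) that is both semi-left-exact and semi-right-exact. Let R be the reflection obtained by factoring terminal morphisms (X → RX → 0) and S the coreflection obtained by factoring initial morphisms (0 → SX → X). Then for every morphism f : X → Y, the canonical comparison morphism from the pushout SY ⊔_{SX} X (of σ_X : SX → X along Sf : SX → SY) to the pullback RX ×_{RY} Y (of Rf : RX → RY along η_Y : Y → RY) is an isomorphism; both objects give the middle object of the (E, M)-factorization of f. -/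
open CategoryTheory CategoryTheory.Limits

universe v u

section Aux
variable {C : Type u} [Category.{v} C]

/-- A morphism lying in both classes of an OFS is an isomorphism. -/
lemma OFS.isIso_of_mem_both (fs : OFS C) {X Y : C} {w : X ⟶ Y}
    (hE : fs.E w) (hM : fs.M w) : IsIso w := by
  obtain ⟨d, ⟨h1, h2⟩, -⟩ := fs.orth hE hM (𝟙 X) (𝟙 Y) (by simp)
  exact ⟨d, h1, h2⟩

/-- The left class of an OFS is stable under pushout. -/
lemma OFS.E_pushout (fs : OFS C) {A B Q P : C} {g : A ⟶ Q} {e : A ⟶ B}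
    {e' : Q ⟶ P} {g' : B ⟶ P} (sq : IsPushout g e e' g') (he : fs.E e) : fs.E e' := by
  haveI := fs.respectsIso_E
  obtain ⟨W, e₂, m₂, he₂, hm₂, hfac⟩ := fs.fac e'
  obtain ⟨d, ⟨hd1, hd2⟩, -⟩ := fs.orth he hm₂ (g ≫ e₂) g'
    (by rw [Category.assoc, hfac, sq.w])
  let t : P ⟶ W := sq.desc e₂ d hd1.symm
  have htl : e' ≫ t = e₂ := sq.inl_desc _ _ _
  have htr : g' ≫ t = d := sq.inr_desc _ _ _
  have htm : t ≫ m₂ = 𝟙 P := by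
    apply sq.hom_ext
    · rw [reassoc_of% htl, hfac, Category.comp_id]
    · rw [reassoc_of% htr, hd2, Category.comp_id]
  have hmt : m₂ ≫ t = 𝟙 W := by
    obtain ⟨x, -, hx⟩ := fs.orth he₂ hm₂ e₂ m₂ rfl
    rw [hx (m₂ ≫ t) ⟨by rw [← Category.assoc, hfac, htl], by
        rw [Category.assoc, htm, Category.comp_id]⟩,
      hx (𝟙 W) ⟨Category.comp_id _, Category.id_comp _⟩]
  haveI : IsIso m₂ := ⟨t, hmt, htm⟩
  rw [← hfac]
  exact MorphismProperty.RespectsIso.postcomp fs.E m₂ e₂ he₂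

/-- The right class of an OFS is stable under pullback. -/
lemma OFS.M_pullback (fs : OFS C) {P X Q Y : C} {a : P ⟶ X} {b : P ⟶ Q}
    {g : X ⟶ Y} {m : Q ⟶ Y} (sq : IsPullback a b g m) (hm : fs.M m) : fs.M a := by
  haveI := fs.respectsIso_M
  obtain ⟨W, e₂, m₂, he₂, hm₂, hfac⟩ := fs.fac a
  obtain ⟨d, ⟨hd1, hd2⟩, -⟩ := fs.orth he₂ hm b (m₂ ≫ g)
    (by rw [← Category.assoc, hfac, sq.w])
  let t : W ⟶ P := sq.lift m₂ d hd2.symm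
  have hta : t ≫ a = m₂ := sq.lift_fst _ _ _
  have htb : t ≫ b = d := sq.lift_snd _ _ _
  have het : e₂ ≫ t = 𝟙 P := by
    apply sq.hom_ext
    · rw [Category.assoc, hta, hfac, Category.id_comp]
    · rw [Category.assoc, htb, hd1, Category.id_comp]
  have hte : t ≫ e₂ = 𝟙 W := by
    obtain ⟨x, -, hx⟩ := fs.orth he₂ hm₂ e₂ m₂ rfl
    rw [hx (t ≫ e₂) ⟨by rw [← Category.assoc, het, Category.id_comp], by
        rw [Category.assoc, hfac, hta]⟩,
      hx (𝟙 W) ⟨Category.comp_id _, Category.id_comp _⟩]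
  haveI : IsIso e₂ := ⟨t, het, hte⟩
  rw [← hfac]
  exact MorphismProperty.RespectsIso.precomp fs.M e₂ m₂ hm₂

end Aux

/-- Let `C` be a category with a zero object, finite limits and finite colimits, equipped
with a torsion theory `(E, M)` (both classes 3-for-2) which is semi-left-exact (`E` is
stable under pullback along `M`-morphisms) and semi-right-exact (`M` is stable under
pushout along `E`-morphisms). Let `R` (with unit `η`) be the reflection obtained by
factoring terminal morphisms and `S` (with counit `σ`) the coreflection obtained by
factoring initial morphisms. Then for every `f : X ⟶ Y` the canonical comparison morphism
from the pushout `SY ⊔_{SX} X` (of `σ_X` along `Sf`) to the pullback `RX ×_{RY} Y` (of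
`Rf` along `η_Y`) — i.e. the unique `w` compatible with the maps from `X` and to `Y` —
exists and is an isomorphism, and both objects give the middle object of the
`(E, M)`-factorization of `f`. -/
theorem torsionTheory_pushout_iso_pullback {C : Type u} [Category.{v} C]
    [HasFiniteLimits C] [HasFiniteColimits C] {Z : C} (hZ : IsZero Z)
    (fs : OFS C) (hE32 : IsThreeForTwo fs.E) (hM32 : IsThreeForTwo fs.M)
    (slex : ∀ {P X Q Y : C} (a : P ⟶ X) (b : P ⟶ Q) (e : X ⟶ Y) (m : Q ⟶ Y),
      IsPullback a b e m → fs.E e → fs.M m → fs.E b)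
    (srex : ∀ {A B A' P : C} (e : A ⟶ A') (m : A ⟶ B) (m' : A' ⟶ P) (e' : B ⟶ P),
      IsPushout e m m' e' → fs.M m → fs.E e → fs.M m')
    (S R : C ⥤ C) (σ : S ⟶ 𝟭 C) (η : 𝟭 C ⟶ R)
    (hS : ∀ X : C, fs.E (hZ.to_ (S.obj X)) ∧ fs.M (σ.app X))
    (hR : ∀ X : C, fs.E (η.app X) ∧ fs.M (hZ.from_ (R.obj X))) :
    ∀ {X Y : C} (f : X ⟶ Y),
      -- `X ⟶ SY ⊔_{SX} X ⟶ Y` is the `(E, M)`-factorization of `f`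
      fs.E (pushout.inr (S.map f) (σ.app X)) ∧
      fs.M (pushout.desc (σ.app Y) f (by simpa using σ.naturality f) :
        pushout (S.map f) (σ.app X) ⟶ Y) ∧
      -- `X ⟶ RX ×_{RY} Y ⟶ Y` is the `(E, M)`-factorization of `f`
      fs.E (pullback.lift (η.app X) f (by simpa using (η.naturality f).symm) :
        X ⟶ pullback (R.map f) (η.app Y)) ∧
      fs.M (pullback.snd (R.map f) (η.app Y)) ∧
      -- the canonical comparison morphism exists, is unique, and is an isomorphism
      (∃! w : pushout (S.map f) (σ.app X) ⟶ pullback (R.map f) (η.app Y),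
        pushout.inr (S.map f) (σ.app X) ≫ w =
          pullback.lift (η.app X) f (by simpa using (η.naturality f).symm) ∧
        w ≫ pullback.snd (R.map f) (η.app Y) =
          pushout.desc (σ.app Y) f (by simpa using σ.naturality f)) ∧
      (∀ w : pushout (S.map f) (σ.app X) ⟶ pullback (R.map f) (η.app Y),
        (pushout.inr (S.map f) (σ.app X) ≫ w =
          pullback.lift (η.app X) f (by simpa using (η.naturality f).symm) ∧
         w ≫ pullback.snd (R.map f) (η.app Y) =
          pushout.desc (σ.app Y) f (by simpa using σ.naturality f)) → IsIso w) := by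
  intro X Y f
  -- `S.map f` lies in `E`
  have hSf : fs.E (S.map f) :=
    hE32.cancel_left (hZ.to_ (S.obj X)) (S.map f) (hS X).1
      (by rw [show hZ.to_ (S.obj X) ≫ S.map f = hZ.to_ (S.obj Y) from hZ.eq_of_src _ _]
          exact (hS Y).1)
  -- `R.map f` lies in `M`
  have hRf : fs.M (R.map f) :=
    hM32.cancel_right (R.map f) (hZ.from_ (R.obj Y)) (hR Y).2
      (by rw [show R.map f ≫ hZ.from_ (R.obj Y) = hZ.from_ (R.obj X) from hZ.eq_of_tgt _ _]
          exact (hR X).2)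
  have sqPO : IsPushout (S.map f) (σ.app X) (pushout.inl (S.map f) (σ.app X))
      (pushout.inr (S.map f) (σ.app X)) := IsPushout.of_hasPushout _ _
  have sqPB : IsPullback (pullback.fst (R.map f) (η.app Y)) (pullback.snd (R.map f) (η.app Y))
      (R.map f) (η.app Y) := IsPullback.of_hasPullback _ _
  -- `pushout.inr` is in `E`, as pushout of `S.map f ∈ E`
  have hinr : fs.E (pushout.inr (S.map f) (σ.app X)) := fs.E_pushout sqPO.flip hSf
  -- `pushout.inl` is in `M` by semi-right-exactness
  have hinl : fs.M (pushout.inl (S.map f) (σ.app X)) :=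
    srex (S.map f) (σ.app X) (pushout.inl (S.map f) (σ.app X))
      (pushout.inr (S.map f) (σ.app X)) sqPO (hS X).2 hSf
  -- the descent morphism to `Y` is in `M`
  have hq : fs.M (pushout.desc (σ.app Y) f (by simpa using σ.naturality f) :
      pushout (S.map f) (σ.app X) ⟶ Y) :=
    hM32.cancel_left _ _ hinl (by rw [pushout.inl_desc]; exact (hS Y).2)
  -- `pullback.snd` is in `M`, as pullback of `R.map f ∈ M`
  have hsnd : fs.M (pullback.snd (R.map f) (η.app Y)) := fs.M_pullback sqPB.flip hRf
  -- `pullback.fst` is in `E` by semi-left-exactness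
  have hfst : fs.E (pullback.fst (R.map f) (η.app Y)) :=
    slex (pullback.snd (R.map f) (η.app Y)) (pullback.fst (R.map f) (η.app Y))
      (η.app Y) (R.map f) sqPB.flip (hR Y).1 hRf
  -- the lift morphism from `X` is in `E`
  have hl : fs.E (pullback.lift (η.app X) f (by simpa using (η.naturality f).symm) :
      X ⟶ pullback (R.map f) (η.app Y)) :=
    hE32.cancel_right _ _ hfst (by rw [pullback.lift_fst]; exact (hR X).1)
  refine ⟨hinr, hq, hl, hsnd, ?_, ?_⟩
  · exact fs.orth hinr hsnd _ _ (by rw [pullback.lift_snd, pushout.inr_desc])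
  · rintro w ⟨hw1, hw2⟩
    exact fs.isIso_of_mem_both
      (hE32.cancel_left _ _ hinr (hw1 ▸ hl))
      (hM32.cancel_right _ _ hsnd (hw2 ▸ hq))
end

section
/- Let C be a finitely complete category with terminal object, and let (E, M) be an orthogonal factorization system on C that is semi-left-exact and whose class E is a 3-for-2 class. Let R be the associated reflection, obtained by factoring terminal morphisms X → RX → 1, with unit η_X : X → RX. Then for every morphism f : X → Y, forming the pullback P = RX ×_{RY} Y of Rf : RX → RY along η_Y : Y → RY, the induced morphism X → P lies in E and the projection P → Y lies in M; hence X → P → Y is the (E, M)-factorization of f (the factorization system is left simple). -/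
open CategoryTheory CategoryTheory.Limits

universe v u

/-- A morphism with the unique right lifting property against all of `E` lies in `M`. -/
lemma OFS.mem_M_of_rlp {C : Type u} [Category.{v} C] (fs : OFS C) {X Y : C} (m : X ⟶ Y)
    (h : ∀ {A B : C} (e : A ⟶ B), fs.E e → ∀ (u : A ⟶ X) (v : B ⟶ Y), u ≫ m = e ≫ v →
      ∃! d : B ⟶ X, e ≫ d = u ∧ d ≫ m = v) : fs.M m := by
  obtain ⟨Z, e, m', he, hm', hfac⟩ := fs.fac m
  obtain ⟨d, ⟨hd1, hd2⟩, -⟩ := h e he (𝟙 X) m' (by simp [hfac])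
  obtain ⟨d0, -, hu⟩ := fs.orth he hm' e m' rfl
  have hde : d ≫ e = 𝟙 Z := by
    have h1 := hu (d ≫ e) ⟨by rw [← Category.assoc, hd1, Category.id_comp],
      by rw [Category.assoc, hfac, hd2]⟩
    have h2 := hu (𝟙 Z) ⟨Category.comp_id e, Category.id_comp m'⟩
    rw [h1, h2]
  have : IsIso e := ⟨d, hd1, hde⟩
  rw [← hfac]
  haveI := fs.respectsIso_M
  exact (fs.M.cancel_left_of_respectsIso e m').mpr hm'

/-- Left cancellation for `M`: if `m ∈ M` and `g ≫ m ∈ M` then `g ∈ M`. -/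
lemma OFS.M_cancel {C : Type u} [Category.{v} C] (fs : OFS C) {X Y Z : C}
    (g : X ⟶ Y) (m : Y ⟶ Z) (hm : fs.M m) (hgm : fs.M (g ≫ m)) : fs.M g := by
  refine fs.mem_M_of_rlp g (fun {A B} e he u v huv => ?_)
  obtain ⟨d, ⟨hd1, hd2⟩, hdu⟩ := fs.orth he hgm u (v ≫ m)
    (by rw [← Category.assoc, huv, Category.assoc])
  obtain ⟨d1, -, hu1⟩ := fs.orth he hm (u ≫ g) (v ≫ m) (by rw [huv, Category.assoc])
  have hdg : d ≫ g = v := by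
    have h1 := hu1 (d ≫ g) ⟨by rw [← Category.assoc, hd1],
      by rw [Category.assoc, hd2]⟩
    have h2 := hu1 v ⟨huv.symm, rfl⟩
    rw [h1, h2]
  exact ⟨d, ⟨hd1, hdg⟩, fun d' ⟨h1', h2'⟩ => hdu d' ⟨h1', by rw [← Category.assoc, h2']⟩⟩

/-- `M` is stable under pullback: the second projection of a pullback of `g ∈ M` lies
in `M`. -/
lemma OFS.M_pullback_snd {C : Type u} [Category.{v} C] [HasFiniteLimits C] (fs : OFS C)
    {X Y Z : C} (g : X ⟶ Z) (h : Y ⟶ Z) (hg : fs.M g) : fs.M (pullback.snd g h) := by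
  refine fs.mem_M_of_rlp _ (fun {A B} e he u v huv => ?_)
  obtain ⟨d1, ⟨hd1, hd2⟩, hu1⟩ := fs.orth he hg (u ≫ pullback.fst g h) (v ≫ h)
    (by rw [Category.assoc, pullback.condition, ← Category.assoc, huv, Category.assoc])
  refine ⟨pullback.lift d1 v hd2, ⟨?_, pullback.lift_snd _ _ _⟩, ?_⟩
  · apply pullback.hom_ext
    · rw [Category.assoc, pullback.lift_fst, hd1]
    · rw [Category.assoc, pullback.lift_snd, huv]
  · rintro d' ⟨h1', h2'⟩
    apply pullback.hom_ext
    · rw [pullback.lift_fst]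
      refine hu1 (d' ≫ pullback.fst g h) ⟨by rw [← Category.assoc, h1'], ?_⟩
      rw [Category.assoc, pullback.condition, ← Category.assoc, h2']
    · rw [pullback.lift_snd, h2']

/-- Let `C` be a finitely complete category (in particular with terminal object), and let
`(E, M)` be an orthogonal factorization system on `C` which is semi-left-exact (`E` is
stable under pullback along `M`-morphisms) and whose class `E` is a 3-for-2 class. Let
`R : C ⥤ C` with unit `η : 𝟭 C ⟶ R` be the associated reflection obtained by factoring
terminal morphisms (`η_X : X ⟶ RX` in `E`, `RX ⟶ 1` in `M`). Then for every `f : X ⟶ Y`,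
forming the pullback `P = RX ×_{RY} Y` of `Rf` along `η_Y`, the induced morphism `X ⟶ P`
lies in `E` and the projection `P ⟶ Y` lies in `M`; hence `X ⟶ P ⟶ Y` is the
`(E, M)`-factorization of `f` (the factorization system is left simple). -/
theorem semiLeftExact_is_leftSimple {C : Type u} [Category.{v} C] [HasFiniteLimits C]
    (fs : OFS C)
    (slex : ∀ {P X Q Y : C} (a : P ⟶ X) (b : P ⟶ Q) (e : X ⟶ Y) (m : Q ⟶ Y),
      IsPullback a b e m → fs.E e → fs.M m → fs.E b)
    (hE32 : IsThreeForTwo fs.E)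
    (R : C ⥤ C) (η : 𝟭 C ⟶ R)
    (hE : ∀ X : C, fs.E (η.app X))
    (hM : ∀ X : C, fs.M (terminal.from (R.obj X))) :
    ∀ {X Y : C} (f : X ⟶ Y),
      fs.E (pullback.lift (η.app X) f (by simpa using (η.naturality f).symm) :
        X ⟶ pullback (R.map f) (η.app Y)) ∧
      fs.M (pullback.snd (R.map f) (η.app Y)) ∧
      pullback.lift (η.app X) f (by simpa using (η.naturality f).symm) ≫
        pullback.snd (R.map f) (η.app Y) = f := by
  
  intro X Y f
  have hRf : fs.M (R.map f) := by
    refine fs.M_cancel (R.map f) (terminal.from (R.obj Y)) (hM Y) ?_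
    rw [terminal.comp_from]
    exact hM X
  have hsnd : fs.M (pullback.snd (R.map f) (η.app Y)) := fs.M_pullback_snd _ _ hRf
  have hfst : fs.E (pullback.fst (R.map f) (η.app Y)) :=
    slex _ _ _ _ (IsPullback.of_hasPullback (R.map f) (η.app Y)).flip (hE Y) hRf
  refine ⟨?_, hsnd, pullback.lift_snd _ _ _⟩
  refine hE32.cancel_right _ (pullback.fst (R.map f) (η.app Y)) hfst ?_
  rw [pullback.lift_fst]
  exact hE X
end

section
/- Let D be a triangulated category equipped with a t-structure (D_{≥0}, D_{<0}). Then the heart D^♥ = D_{≥0} ∩ D_{<1} is an abelian category; its kernels and cokernels are computed as follows: for a morphism f : X → Y in D^♥ with a distinguished triangle F → X → Y → F[1] (so F is a fiber of f), ker(f) is the truncation τ_{≥0}F and coker(f) is the truncation τ_{<1}(F[1]). -/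
open CategoryTheory CategoryTheory.Limits CategoryTheory.Pretriangulated

universe v u

variable (D : Type u) [Category.{v} D] [Preadditive D] [HasZeroObject D]
  [HasShift D ℤ] [∀ (n : ℤ), (shiftFunctor D n).Additive] [Pretriangulated D]

/-- A t-structure `(D_{≥0}, D_{<0})` on a triangulated category `D`: a pair of full
subcategories (given by predicates closed under isomorphisms) such that
(i) `Hom(X, Y) = 0` for `X ∈ D_{≥0}`, `Y ∈ D_{<0}`; (ii) `D_{≥0}[1] ⊆ D_{≥0}` and
`D_{<0}[-1] ⊆ D_{<0}`; (iii) every object fits in a distinguished triangle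
`X_{≥0} → X → X_{<0} → X_{≥0}[1]` with `X_{≥0} ∈ D_{≥0}`, `X_{<0} ∈ D_{<0}`. -/
structure PaperTStructure where
  /-- the class `D_{≥0}` -/
  ge : D → Prop
  /-- the class `D_{<0}` -/
  lt : D → Prop
  ge_iso : ∀ {X Y : D}, (X ≅ Y) → ge X → ge Y
  lt_iso : ∀ {X Y : D}, (X ≅ Y) → lt X → lt Y
  hom_zero : ∀ {X Y : D} (f : X ⟶ Y), ge X → lt Y → f = 0
  ge_shift : ∀ X : D, ge X → ge (X⟦(1 : ℤ)⟧)
  lt_shift : ∀ X : D, lt X → lt (X⟦(-1 : ℤ)⟧)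
  exists_triangle : ∀ X : D, ∃ (A B : D) (i : A ⟶ X) (p : X ⟶ B) (c : B ⟶ A⟦(1 : ℤ)⟧),
    ge A ∧ lt B ∧ Triangle.mk i p c ∈ distTriang D

variable {D}

/-- `D_{≥n} = D_{≥0}[n]`. -/
def PaperTStructure.geN (t : PaperTStructure D) (n : ℤ) (X : D) : Prop :=
  ∃ A : D, t.ge A ∧ Nonempty (X ≅ A⟦n⟧)

/-- `D_{<n} = D_{<0}[n]`. -/
def PaperTStructure.ltN (t : PaperTStructure D) (n : ℤ) (X : D) : Prop :=
  ∃ B : D, t.lt B ∧ Nonempty (X ≅ B⟦n⟧)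

/-- The heart `D^♥ = D_{≥0} ∩ D_{<1}` of a t-structure. -/
def PaperTStructure.heart (t : PaperTStructure D) (X : D) : Prop :=
  t.ge X ∧ t.ltN 1 X

namespace PaperTStructure

variable (t : PaperTStructure D)

section Auxiliary

lemma geN_of_iso {X Y : D} (e : X ≅ Y) {n : ℤ} (h : t.geN n X) : t.geN n Y := by
  obtain ⟨A, hA, ⟨e'⟩⟩ := h
  exact ⟨A, hA, ⟨e.symm ≪≫ e'⟩⟩

lemma ltN_of_iso {X Y : D} (e : X ≅ Y) {n : ℤ} (h : t.ltN n X) : t.ltN n Y := by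
  obtain ⟨B, hB, ⟨e'⟩⟩ := h
  exact ⟨B, hB, ⟨e.symm ≪≫ e'⟩⟩

lemma geN_zero_of_ge {X : D} (h : t.ge X) : t.geN 0 X :=
  ⟨X, h, ⟨((shiftFunctorZero D ℤ).app X).symm⟩⟩

lemma ge_of_geN_zero {X : D} (h : t.geN 0 X) : t.ge X := by
  obtain ⟨A, hA, ⟨e⟩⟩ := h
  exact t.ge_iso (((shiftFunctorZero D ℤ).app A).symm ≪≫ e.symm) hA

lemma ltN_zero_of_lt {X : D} (h : t.lt X) : t.ltN 0 X :=
  ⟨X, h, ⟨((shiftFunctorZero D ℤ).app X).symm⟩⟩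

lemma lt_of_ltN_zero {X : D} (h : t.ltN 0 X) : t.lt X := by
  obtain ⟨B, hB, ⟨e⟩⟩ := h
  exact t.lt_iso (((shiftFunctorZero D ℤ).app B).symm ≪≫ e.symm) hB

lemma geN_shift {X : D} {a : ℤ} (h : t.geN a X) (n b : ℤ) (hb : a + n = b) :
    t.geN b (X⟦n⟧) := by
  obtain ⟨A, hA, ⟨e⟩⟩ := h
  exact ⟨A, hA, ⟨(shiftFunctor D n).mapIso e ≪≫ ((shiftFunctorAdd' D a n b hb).app A).symm⟩⟩

lemma ltN_shift {X : D} {a : ℤ} (h : t.ltN a X) (n b : ℤ) (hb : a + n = b) :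
    t.ltN b (X⟦n⟧) := by
  obtain ⟨B, hB, ⟨e⟩⟩ := h
  exact ⟨B, hB, ⟨(shiftFunctor D n).mapIso e ≪≫ ((shiftFunctorAdd' D a n b hb).app B).symm⟩⟩

lemma ge_shift_of_nonneg {A : D} (h : t.ge A) (n : ℤ) (hn : 0 ≤ n) : t.ge (A⟦n⟧) := by
  refine Int.le_induction (motive := fun m _ => t.ge (A⟦m⟧))
    (t.ge_iso ((shiftFunctorZero D ℤ).app A).symm h) (fun k _ hk =>
      t.ge_iso ((shiftFunctorAdd' D k 1 (k + 1) rfl).app A).symm (t.ge_shift _ hk)) n hn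

lemma lt_shift_of_nonpos {B : D} (h : t.lt B) (n : ℤ) (hn : n ≤ 0) : t.lt (B⟦n⟧) := by
  refine Int.le_induction_down (motive := fun m _ => t.lt (B⟦m⟧))
    (t.lt_iso ((shiftFunctorZero D ℤ).app B).symm h) (fun k _ hk =>
      t.lt_iso ((shiftFunctorAdd' D k (-1) (k - 1) (by ring)).app B).symm (t.lt_shift _ hk)) n hn

lemma geN_mono {X : D} {a b : ℤ} (hab : a ≤ b) (h : t.geN b X) : t.geN a X := by
  obtain ⟨A, hA, ⟨e⟩⟩ := h
  exact ⟨A⟦b - a⟧, t.ge_shift_of_nonneg hA _ (by omega),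
    ⟨e ≪≫ (shiftFunctorAdd' D (b - a) a b (by ring)).app A⟩⟩

lemma ltN_mono {X : D} {a b : ℤ} (hab : a ≤ b) (h : t.ltN a X) : t.ltN b X := by
  obtain ⟨B, hB, ⟨e⟩⟩ := h
  exact ⟨B⟦a - b⟧, t.lt_shift_of_nonpos hB _ (by omega),
    ⟨e ≪≫ (shiftFunctorAdd' D (a - b) b a (by ring)).app B⟩⟩

lemma hom_zero' {X Y : D} (f : X ⟶ Y) {a b : ℤ} (hX : t.geN a X) (hY : t.ltN b Y)
    (hba : b ≤ a) : f = 0 := by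
  obtain ⟨A, hA, ⟨eX⟩⟩ := t.geN_mono hba hX
  obtain ⟨B, hB, ⟨eY⟩⟩ := hY
  have h0 : eX.inv ≫ f ≫ eY.hom = 0 := by
    have h1 := t.hom_zero ((shiftFunctor D b).preimage (eX.inv ≫ f ≫ eY.hom)) hA hB
    rw [← Functor.map_preimage (shiftFunctor D b) (eX.inv ≫ f ≫ eY.hom), h1, Functor.map_zero]
  calc f = eX.hom ≫ (eX.inv ≫ f ≫ eY.hom) ≫ eY.inv := by simp
  _ = 0 := by rw [h0]; simp

lemma isZero₃_of_mor₂_eq_zero {A X B : D} {i : A ⟶ X} {p : X ⟶ B} {c : B ⟶ A⟦(1 : ℤ)⟧}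
    (hT : Triangle.mk i p c ∈ distTriang D) (hA : t.ge A) (hB : t.lt B) (hp : p = 0) :
    IsZero B := by
  obtain ⟨r, hr⟩ := Triangle.yoneda_exact₂ _ (rot_of_distTriang _ hT) (𝟙 B)
    (by change p ≫ 𝟙 B = 0; rw [Category.comp_id, hp])
  rw [IsZero.iff_id_eq_zero, hr, t.hom_zero r (t.ge_shift A hA) hB, comp_zero]
  rfl

lemma isZero₁_of_mor₁_eq_zero {A X B : D} {i : A ⟶ X} {p : X ⟶ B} {c : B ⟶ A⟦(1 : ℤ)⟧}
    (hT : Triangle.mk i p c ∈ distTriang D) (hA : t.ge A) (hB : t.lt B) (hi : i = 0) :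
    IsZero A := by
  obtain ⟨r, hr⟩ := Triangle.coyoneda_exact₂ _ (inv_rot_of_distTriang _ hT) (𝟙 A)
    (by change 𝟙 A ≫ i = 0; rw [Category.id_comp, hi])
  rw [IsZero.iff_id_eq_zero, hr, t.hom_zero r hA (t.lt_shift B hB), zero_comp]
  rfl

lemma ge_and_lt_of_isZero {X : D} (h : IsZero X) : t.ge X ∧ t.lt X := by
  obtain ⟨A, B, i, p, c, hA, hB, hT⟩ := t.exists_triangle X
  have hB0 : IsZero B := t.isZero₃_of_mor₂_eq_zero hT hA hB (h.eq_of_src _ _)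
  have hA0 : IsZero A := t.isZero₁_of_mor₁_eq_zero hT hA hB (h.eq_of_tgt _ _)
  exact ⟨t.ge_iso (hA0.iso h) hA, t.lt_iso (hB0.iso h) hB⟩

lemma geN_of_isZero {X : D} (h : IsZero X) (n : ℤ) : t.geN n X :=
  ⟨X, (t.ge_and_lt_of_isZero h).1, ⟨h.iso ((shiftFunctor D n).map_isZero h)⟩⟩

lemma ltN_of_isZero {X : D} (h : IsZero X) (n : ℤ) : t.ltN n X :=
  ⟨X, (t.ge_and_lt_of_isZero h).2, ⟨h.iso ((shiftFunctor D n).map_isZero h)⟩⟩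

lemma heart_of_isZero {X : D} (h : IsZero X) : t.heart X :=
  ⟨(t.ge_and_lt_of_isZero h).1, t.ltN_of_isZero h 1⟩

lemma ge_ext₂ {T : Triangle D} (hT : T ∈ distTriang D) (h₁ : t.ge T.obj₁)
    (h₃ : t.ge T.obj₃) : t.ge T.obj₂ := by
  obtain ⟨A, B, i, p, c, hA, hB, hTr⟩ := t.exists_triangle T.obj₂
  have hp : p = 0 := by
    obtain ⟨e, he⟩ := Triangle.yoneda_exact₂ T hT p (t.hom_zero _ h₁ hB)
    rw [he, t.hom_zero e h₃ hB, comp_zero]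
  have hB0 : IsZero B := t.isZero₃_of_mor₂_eq_zero hTr hA hB hp
  have : IsIso i := (Triangle.isZero₃_iff_isIso₁ _ hTr).1 hB0
  exact t.ge_iso (asIso i) hA

lemma lt_ext₂ {T : Triangle D} (hT : T ∈ distTriang D) (h₁ : t.lt T.obj₁)
    (h₃ : t.lt T.obj₃) : t.lt T.obj₂ := by
  obtain ⟨A, B, i, p, c, hA, hB, hTr⟩ := t.exists_triangle T.obj₂
  have hi : i = 0 := by
    obtain ⟨e, he⟩ := Triangle.coyoneda_exact₂ T hT i (t.hom_zero _ hA h₃)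
    rw [he, t.hom_zero e hA h₁, zero_comp]
  have hA0 : IsZero A := t.isZero₁_of_mor₁_eq_zero hTr hA hB hi
  have : IsIso p := (Triangle.isZero₁_iff_isIso₂ _ hTr).1 hA0
  exact t.lt_iso (asIso p).symm hB

lemma geN_ext {T : Triangle D} (hT : T ∈ distTriang D) {n : ℤ} (h₁ : t.geN n T.obj₁)
    (h₃ : t.geN n T.obj₃) : t.geN n T.obj₂ := by
  have hT' : (Triangle.shiftFunctor D (-n)).obj T ∈ distTriang D :=
    Triangle.shift_distinguished T hT (-n)
  have h2 : t.ge (T.obj₂⟦-n⟧) := t.ge_ext₂ hT'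
    (t.ge_of_geN_zero (t.geN_shift h₁ (-n) 0 (by ring)))
    (t.ge_of_geN_zero (t.geN_shift h₃ (-n) 0 (by ring)))
  exact t.geN_of_iso ((shiftFunctorCompIsoId D (-n) n (by ring)).app T.obj₂)
    (t.geN_shift (t.geN_zero_of_ge h2) n n (by ring))

lemma ltN_ext {T : Triangle D} (hT : T ∈ distTriang D) {n : ℤ} (h₁ : t.ltN n T.obj₁)
    (h₃ : t.ltN n T.obj₃) : t.ltN n T.obj₂ := by
  have hT' : (Triangle.shiftFunctor D (-n)).obj T ∈ distTriang D :=
    Triangle.shift_distinguished T hT (-n)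
  have h2 : t.lt (T.obj₂⟦-n⟧) := t.lt_ext₂ hT'
    (t.lt_of_ltN_zero (t.ltN_shift h₁ (-n) 0 (by ring)))
    (t.lt_of_ltN_zero (t.ltN_shift h₃ (-n) 0 (by ring)))
  exact t.ltN_of_iso ((shiftFunctorCompIsoId D (-n) n (by ring)).app T.obj₂)
    (t.ltN_shift (t.ltN_zero_of_lt h2) n n (by ring))

lemma isZero_of_isZero_shift {X : D} (n : ℤ) (h : IsZero (X⟦n⟧)) : IsZero X :=
  IsZero.of_iso ((shiftFunctor D (-n)).map_isZero h)
    (((shiftFunctorCompIsoId D n (-n) (by ring)).app X).symm)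

end Auxiliary

section Spec

/-- The kernel universal property. -/
lemma kernel_spec {X Y : D} (hX : t.heart X) (hY : t.heart Y) (f : X ⟶ Y)
    {F : D} {i : F ⟶ X} {c : Y ⟶ F⟦(1 : ℤ)⟧} (hT : Triangle.mk i f c ∈ distTriang D)
    {K F' : D} {u : K ⟶ F} {v : F ⟶ F'} {w : F' ⟶ K⟦(1 : ℤ)⟧}
    (hK : t.ge K) (hF' : t.lt F') (hT2 : Triangle.mk u v w ∈ distTriang D) :
    t.heart K ∧ (u ≫ i) ≫ f = 0 ∧
      ∀ (W : D), t.heart W → ∀ g : W ⟶ X, g ≫ f = 0 →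
        ∃! h : W ⟶ K, h ≫ (u ≫ i) = g := by
  have hF1 : t.ltN 1 F := t.ltN_ext (inv_rot_of_distTriang _ hT)
    (t.ltN_mono (by omega) (t.ltN_shift hY.2 (-1) 0 (by ring))) hX.2
  have hK1 : t.ltN 1 K := t.ltN_ext (inv_rot_of_distTriang _ hT2)
    (t.ltN_mono (by omega) (t.ltN_shift (t.ltN_zero_of_lt hF') (-1) (-1) (by ring))) hF1
  have h12 : i ≫ f = 0 := comp_distTriang_mor_zero₁₂ _ hT
  refine ⟨⟨hK, hK1⟩, by rw [Category.assoc, h12, comp_zero], ?_⟩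
  intro W hW g hg
  obtain ⟨g', hg'⟩ : ∃ g' : W ⟶ F, g = g' ≫ i := Triangle.coyoneda_exact₂ _ hT g hg
  obtain ⟨h, hh⟩ : ∃ h : W ⟶ K, g' = h ≫ u :=
    Triangle.coyoneda_exact₂ _ hT2 g' (t.hom_zero _ hW.1 hF')
  have hfac : h ≫ (u ≫ i) = g := by rw [← Category.assoc, ← hh, ← hg']
  have key : ∀ d : W ⟶ K, d ≫ (u ≫ i) = 0 → d = 0 := by
    intro d hd
    have hdu : d ≫ u = 0 := by
      obtain ⟨e, he⟩ := Triangle.coyoneda_exact₂ _ (inv_rot_of_distTriang _ hT)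
        (d ≫ u) (by rw [← Category.assoc] at hd; exact hd)
      exact he.trans (by rw [t.hom_zero' e (t.geN_zero_of_ge hW.1)
        (t.ltN_shift hY.2 (-1) 0 (by ring)) le_rfl]; exact zero_comp)
    obtain ⟨e', he'⟩ := Triangle.coyoneda_exact₂ _ (inv_rot_of_distTriang _ hT2) d hdu
    rw [he', t.hom_zero' e' (t.geN_zero_of_ge hW.1)
      (t.ltN_shift (t.ltN_zero_of_lt hF') (-1) (-1) (by ring)) (by omega), zero_comp]
    rfl
  refine ⟨h, hfac, fun h' hh' => ?_⟩
  rw [← sub_eq_zero]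
  exact key (h' - h) (by rw [Preadditive.sub_comp, hh', hfac, sub_self])

/-- The cokernel universal property. -/
lemma cokernel_spec {X Y : D} (hX : t.heart X) (hY : t.heart Y) (f : X ⟶ Y)
    {F : D} {i : F ⟶ X} {c : Y ⟶ F⟦(1 : ℤ)⟧} (hT : Triangle.mk i f c ∈ distTriang D)
    {G Q : D} {u' : G ⟶ F⟦(1 : ℤ)⟧} {v' : F⟦(1 : ℤ)⟧ ⟶ Q} {w' : Q ⟶ G⟦(1 : ℤ)⟧}
    (hG : t.geN 1 G) (hQ : t.ltN 1 Q) (hT3 : Triangle.mk u' v' w' ∈ distTriang D) :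
    t.heart Q ∧ f ≫ (c ≫ v') = 0 ∧
      ∀ (W : D), t.heart W → ∀ g : Y ⟶ W, f ≫ g = 0 →
        ∃! h : Q ⟶ W, (c ≫ v') ≫ h = g := by
  have hFm1 : t.geN (-1) F := t.geN_ext (inv_rot_of_distTriang _ hT)
    (t.geN_shift (t.geN_zero_of_ge hY.1) (-1) (-1) (by ring))
    (t.geN_mono (by omega) (t.geN_zero_of_ge hX.1))
  have hF1 : t.ge (F⟦(1 : ℤ)⟧) := t.ge_of_geN_zero (t.geN_shift hFm1 1 0 (by ring))
  have hQge : t.ge Q := t.ge_ext₂ (rot_of_distTriang _ hT3) hF1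
    (t.ge_of_geN_zero (t.geN_mono (by omega) (t.geN_shift hG 1 2 (by ring))))
  have h23 : f ≫ c = 0 := comp_distTriang_mor_zero₂₃ _ hT
  refine ⟨⟨hQge, hQ⟩, by rw [← Category.assoc, h23, zero_comp], ?_⟩
  intro W hW g hg
  obtain ⟨g', hg'⟩ : ∃ g' : F⟦(1 : ℤ)⟧ ⟶ W, g = c ≫ g' := Triangle.yoneda_exact₃ _ hT g hg
  obtain ⟨h, hh⟩ : ∃ h : Q ⟶ W, g' = v' ≫ h :=
    Triangle.yoneda_exact₂ _ hT3 g' (t.hom_zero' _ hG hW.2 le_rfl)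
  have hfac : (c ≫ v') ≫ h = g := by rw [Category.assoc, ← hh, ← hg']
  have key : ∀ d : Q ⟶ W, (c ≫ v') ≫ d = 0 → d = 0 := by
    intro d hd
    have hvd : v' ≫ d = 0 := by
      obtain ⟨e, he⟩ := Triangle.yoneda_exact₃ _ (rot_of_distTriang _ hT) (v' ≫ d)
        (by have h' : (c ≫ v') ≫ d = 0 := hd; rw [Category.assoc] at h'; exact h')
      exact he.trans (by rw [t.hom_zero' e (t.geN_shift (t.geN_zero_of_ge hX.1) 1 1 (by ring)) hW.2 le_rfl]; exact
        comp_zero)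
    obtain ⟨e', he'⟩ := Triangle.yoneda_exact₂ _ (rot_of_distTriang _ hT3) d hvd
    rw [he', t.hom_zero' e' (t.geN_shift hG 1 2 (by ring)) hW.2 (by omega), comp_zero]
    rfl
  refine ⟨h, hfac, fun h' hh' => ?_⟩
  rw [← sub_eq_zero]
  exact key (h' - h) (by rw [Preadditive.comp_sub, hh', hfac, sub_self])

end Spec

section AbelianConstruction

/-- Kernel data for a morphism in the heart. -/
lemma kernel_exists {X Y : D} (hX : t.heart X) (hY : t.heart Y) (f : X ⟶ Y) :
    ∃ (K : D) (hK : t.heart K) (k : K ⟶ X), k ≫ f = 0 ∧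
      (∀ (W : D), t.heart W → ∀ g : W ⟶ X, g ≫ f = 0 → ∃! h : W ⟶ K, h ≫ k = g) ∧
      (∀ (hm : ∀ (W : D) (_ : t.heart W) (d : W ⟶ X), d ≫ f = 0 → d = 0), IsZero K) := by
  obtain ⟨F, i, c, hT⟩ := distinguished_cocone_triangle₁ f
  obtain ⟨K, F', u, v, w, hK, hF', hT2⟩ := t.exists_triangle F
  obtain ⟨hKh, hk0, huniv⟩ := t.kernel_spec hX hY f hT hK hF' hT2
  refine ⟨K, hKh, u ≫ i, hk0, huniv, ?_⟩
  intro hm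
  have hk : (u ≫ i) = 0 := hm K hKh _ hk0
  obtain ⟨h0, hh0, huniq⟩ := huniv K hKh 0 (by rw [zero_comp])
  have e1 : 𝟙 K = h0 := huniq (𝟙 K) (by simpa using hk)
  have e2 : (0 : K ⟶ K) = h0 := huniq 0 (by simp)
  rw [IsZero.iff_id_eq_zero, e1, ← e2]

/-- Cokernel data for a morphism in the heart; moreover the "fiber" `F` can be arranged
to satisfy extra properties: any map through it out of a heart object behaves well. -/
lemma cokernel_exists {X Y : D} (hX : t.heart X) (hY : t.heart Y) (f : X ⟶ Y) :
    ∃ (Q : D) (hQ : t.heart Q) (q : Y ⟶ Q), f ≫ q = 0 ∧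
      (∀ (W : D), t.heart W → ∀ g : Y ⟶ W, f ≫ g = 0 → ∃! h : Q ⟶ W, q ≫ h = g) ∧
      (∀ (he : ∀ (W : D) (_ : t.heart W) (d : Y ⟶ W), f ≫ d = 0 → d = 0), IsZero Q) := by
  obtain ⟨F, i, c, hT⟩ := distinguished_cocone_triangle₁ f
  obtain ⟨A, B, a, b, e, hA, hB, hTr⟩ := t.exists_triangle F
  have hT3 : (Triangle.shiftFunctor D (1 : ℤ)).obj (Triangle.mk a b e) ∈ distTriang D :=
    Triangle.shift_distinguished _ hTr 1
  obtain ⟨hQh, hq0, huniv⟩ := t.cokernel_spec hX hY f hT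
    (t.geN_shift (t.geN_zero_of_ge hA) 1 1 (by ring))
    (t.ltN_shift (t.ltN_zero_of_lt hB) 1 1 (by ring)) hT3
  refine ⟨_, hQh, _, hq0, huniv, ?_⟩
  intro he
  have hq : c ≫ ((Triangle.shiftFunctor D (1 : ℤ)).obj (Triangle.mk a b e)).mor₂ = 0 :=
    he _ hQh _ hq0
  obtain ⟨h0, hh0, huniq⟩ := huniv _ hQh 0 (by rw [comp_zero])
  have e1 : 𝟙 _ = h0 := huniq (𝟙 _) ((Category.comp_id _).trans hq)
  have e2 : (0 : _ ⟶ _) = h0 := huniq 0 (by simp)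
  rw [IsZero.iff_id_eq_zero, e1, ← e2]

/-- If `f` is a monomorphism of the heart, it is the kernel of its cokernel. -/
lemma normalMono_aux {X Y : D} (hX : t.heart X) (hY : t.heart Y) (f : X ⟶ Y)
    (hmono : ∀ (W : D), t.heart W → ∀ d : W ⟶ X, d ≫ f = 0 → d = 0) :
    ∃ (Q : D) (hQ : t.heart Q) (q : Y ⟶ Q), f ≫ q = 0 ∧
      ∀ (W : D), t.heart W → ∀ g : W ⟶ Y, g ≫ q = 0 → ∃ h : W ⟶ X, h ≫ f = g := by
  obtain ⟨F, i, c, hT⟩ := distinguished_cocone_triangle₁ f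
  obtain ⟨K, F', u, v, w, hK, hF', hT2⟩ := t.exists_triangle F
  obtain ⟨hKh, hk0, huniv⟩ := t.kernel_spec hX hY f hT hK hF' hT2
  have hKzero : IsZero K := by
    have hk : u ≫ i = 0 := hmono K hKh _ hk0
    obtain ⟨h0, hh0, huniq⟩ := huniv K hKh 0 (by rw [zero_comp])
    have e1 : 𝟙 K = h0 := huniq (𝟙 K) (by simpa using hk)
    have e2 : (0 : K ⟶ K) = h0 := huniq 0 (by simp)
    rw [IsZero.iff_id_eq_zero, e1, ← e2]
  have hT3 : (Triangle.shiftFunctor D (1 : ℤ)).obj (Triangle.mk u v w) ∈ distTriang D :=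
    Triangle.shift_distinguished _ hT2 1
  obtain ⟨hQh, hq0, _⟩ := t.cokernel_spec hX hY f hT
    (t.geN_shift (t.geN_zero_of_ge hK) 1 1 (by ring))
    (t.ltN_shift (t.ltN_zero_of_lt hF') 1 1 (by ring)) hT3
  refine ⟨_, hQh, c ≫ ((Triangle.shiftFunctor D (1 : ℤ)).obj (Triangle.mk u v w)).mor₂,
    hq0, ?_⟩
  intro W hW g hg
  have hgc : g ≫ c = 0 := by
    obtain ⟨e, he⟩ : ∃ e : W ⟶ K⟦(1 : ℤ)⟧, g ≫ c =
        e ≫ ((Triangle.shiftFunctor D (1 : ℤ)).obj (Triangle.mk u v w)).mor₁ :=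
      Triangle.coyoneda_exact₂ _ hT3 (g ≫ c) ((Category.assoc _ _ _).trans hg)
    exact he.trans (by rw [((shiftFunctor D (1 : ℤ)).map_isZero hKzero).eq_of_tgt e 0]; exact zero_comp)
  obtain ⟨h, hh⟩ : ∃ h : W ⟶ X, g = h ≫ f := Triangle.coyoneda_exact₃ _ hT g hgc
  exact ⟨h, hh.symm⟩

/-- If `f` is an epimorphism of the heart, it is the cokernel of its kernel. -/
lemma normalEpi_aux {X Y : D} (hX : t.heart X) (hY : t.heart Y) (f : X ⟶ Y)
    (hepi : ∀ (W : D), t.heart W → ∀ d : Y ⟶ W, f ≫ d = 0 → d = 0) :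
    ∃ (K : D) (hK : t.heart K) (k : K ⟶ X), k ≫ f = 0 ∧
      ∀ (W : D), t.heart W → ∀ g : X ⟶ W, k ≫ g = 0 → ∃ h : Y ⟶ W, f ≫ h = g := by
  obtain ⟨F, i, c, hT⟩ := distinguished_cocone_triangle₁ f
  obtain ⟨K, F', u, v, w, hK, hF', hT2⟩ := t.exists_triangle F
  obtain ⟨hKh, hk0, _⟩ := t.kernel_spec hX hY f hT hK hF' hT2
  have hT3 : (Triangle.shiftFunctor D (1 : ℤ)).obj (Triangle.mk u v w) ∈ distTriang D :=
    Triangle.shift_distinguished _ hT2 1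
  obtain ⟨hQh, hq0, huniv⟩ := t.cokernel_spec hX hY f hT
    (t.geN_shift (t.geN_zero_of_ge hK) 1 1 (by ring))
    (t.ltN_shift (t.ltN_zero_of_lt hF') 1 1 (by ring)) hT3
  have hQzero : IsZero (F'⟦(1 : ℤ)⟧) := by
    have hq : c ≫ ((Triangle.shiftFunctor D (1 : ℤ)).obj (Triangle.mk u v w)).mor₂ = 0 :=
      hepi _ hQh _ hq0
    obtain ⟨h0, hh0, huniq⟩ := huniv (F'⟦(1 : ℤ)⟧) hQh 0 (by rw [comp_zero])
    have e1 : 𝟙 (F'⟦(1 : ℤ)⟧) = h0 := huniq (𝟙 _) ((Category.comp_id _).trans hq)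
    have e2 : (0 : F'⟦(1 : ℤ)⟧ ⟶ F'⟦(1 : ℤ)⟧) = h0 := huniq 0 (by simp)
    rw [IsZero.iff_id_eq_zero, e1, ← e2]
  have hF'zero : IsZero F' := isZero_of_isZero_shift 1 hQzero
  refine ⟨K, hKh, u ≫ i, hk0, ?_⟩
  intro W hW g hg
  have hig : i ≫ g = 0 := by
    obtain ⟨e, he⟩ : ∃ e : F' ⟶ W, i ≫ g = v ≫ e :=
      Triangle.yoneda_exact₂ _ hT2 (i ≫ g) ((Category.assoc _ _ _).symm.trans hg)
    rw [he, hF'zero.eq_of_src e 0, comp_zero]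
  obtain ⟨h, hh⟩ : ∃ h : Y ⟶ W, g = f ≫ h := Triangle.yoneda_exact₂ _ hT g hig
  exact ⟨h, hh.symm⟩

lemma heart_biprod {X Y : D} (hX : t.heart X) (hY : t.heart Y) : t.heart (X ⊞ Y) :=
  ⟨t.ge_ext₂ (binaryBiproductTriangle_distinguished X Y) hX.1 hY.1,
   t.ltN_ext (binaryBiproductTriangle_distinguished X Y) hX.2 hY.2⟩

lemma hasZeroObject_heart : HasZeroObject (ObjectProperty.FullSubcategory t.heart) := by
  obtain ⟨Z, hZ⟩ := HasZeroObject.zero (C := D)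
  refine ⟨⟨⟨Z, t.heart_of_isZero hZ⟩, ?_⟩⟩
  rw [IsZero.iff_id_eq_zero]
  ext
  exact hZ.eq_of_src _ _

lemma hasBinaryBiproducts_heart : HasBinaryBiproducts (ObjectProperty.FullSubcategory t.heart) where
  has_binary_biproduct P Q := HasBinaryBiproduct.mk
    { bicone :=
      { pt := ⟨P.obj ⊞ Q.obj, t.heart_biprod P.2 Q.2⟩
        fst := ObjectProperty.homMk (biprod.fst : P.obj ⊞ Q.obj ⟶ P.obj)
        snd := ObjectProperty.homMk (biprod.snd : P.obj ⊞ Q.obj ⟶ Q.obj)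
        inl := ObjectProperty.homMk (biprod.inl : P.obj ⟶ P.obj ⊞ Q.obj)
        inr := ObjectProperty.homMk (biprod.inr : Q.obj ⟶ P.obj ⊞ Q.obj)
        inl_fst := by ext; exact biprod.inl_fst
        inl_snd := by ext; exact biprod.inl_snd
        inr_fst := by ext; exact biprod.inr_fst
        inr_snd := by ext; exact biprod.inr_snd }
      isBilimit := isBinaryBilimitOfTotal _ (by ext : 1; exact biprod.total (X := P.obj) (Y := Q.obj)) }

lemma hasKernels_heart : HasKernels (ObjectProperty.FullSubcategory t.heart) := by
  constructor
  intro P Q f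
  obtain ⟨K, hK, k, hk0, huniv, -⟩ := t.kernel_exists P.2 Q.2 f.hom
  exact HasLimit.mk
    { cone := KernelFork.ofι (f := f)
        (show (⟨K, hK⟩ : ObjectProperty.FullSubcategory t.heart) ⟶ P from
          ObjectProperty.homMk k) (by ext; exact hk0)
      isLimit := KernelFork.IsLimit.ofι _ _
        (fun {W'} g' hg' => ObjectProperty.homMk
          (huniv W'.obj W'.2 g'.hom (congrArg InducedCategory.Hom.hom hg')).choose)
        (fun {W'} g' hg' => by
          ext; exact (huniv W'.obj W'.2 g'.hom (congrArg InducedCategory.Hom.hom hg')).choose_spec.1)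
        (fun {W'} g' hg' m hm => by
          ext; exact (huniv W'.obj W'.2 g'.hom (congrArg InducedCategory.Hom.hom hg')).choose_spec.2
            m.hom (congrArg InducedCategory.Hom.hom hm)) }

lemma hasCokernels_heart : HasCokernels (ObjectProperty.FullSubcategory t.heart) := by
  constructor
  intro P Q f
  obtain ⟨C', hC, q, hq0, huniv, -⟩ := t.cokernel_exists P.2 Q.2 f.hom
  exact HasColimit.mk
    { cocone := CokernelCofork.ofπ (f := f)
        (show Q ⟶ (⟨C', hC⟩ : ObjectProperty.FullSubcategory t.heart) from
          ObjectProperty.homMk q) (by ext; exact hq0)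
      isColimit := CokernelCofork.IsColimit.ofπ _ _
        (fun {W'} g' hg' => ObjectProperty.homMk
          (huniv W'.obj W'.2 g'.hom (congrArg InducedCategory.Hom.hom hg')).choose)
        (fun {W'} g' hg' => by
          ext; exact (huniv W'.obj W'.2 g'.hom (congrArg InducedCategory.Hom.hom hg')).choose_spec.1)
        (fun {W'} g' hg' m hm => by
          ext; exact (huniv W'.obj W'.2 g'.hom (congrArg InducedCategory.Hom.hom hg')).choose_spec.2
            m.hom (congrArg InducedCategory.Hom.hom hm)) }

noncomputable def normalMonoCategory_heart : IsNormalMonoCategory (ObjectProperty.FullSubcategory t.heart) := by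
  constructor
  intro P Q f hf
  haveI : Mono f := hf
  have hmono : ∀ (W : D), t.heart W → ∀ d : W ⟶ P.obj, d ≫ f.hom = 0 → d = 0 := by
    intro W hW d hd
    let W' : ObjectProperty.FullSubcategory t.heart := ⟨W, hW⟩
    let d' : W' ⟶ P := ObjectProperty.homMk d
    have h2 : d' ≫ f = 0 ≫ f := by rw [zero_comp]; ext; exact hd
    exact congrArg InducedCategory.Hom.hom ((cancel_mono f).1 h2)
  have H := t.normalMono_aux P.2 Q.2 f.hom hmono
  let Zq : ObjectProperty.FullSubcategory t.heart := ⟨H.choose, H.choose_spec.choose⟩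
  let q : Q ⟶ Zq := ObjectProperty.homMk H.choose_spec.choose_spec.choose
  have hw : f ≫ q = 0 := by ext; exact H.choose_spec.choose_spec.choose_spec.1
  have huniv := H.choose_spec.choose_spec.choose_spec.2
  exact ⟨
    { Z := Zq
      g := q
      w := hw
      isLimit := KernelFork.IsLimit.ofι' f hw
        (fun {A} k hk =>
          ⟨ObjectProperty.homMk (huniv A.obj A.2 k.hom (congrArg InducedCategory.Hom.hom hk)).choose,
            by ext; exact (huniv A.obj A.2 k.hom (congrArg InducedCategory.Hom.hom hk)).choose_spec⟩) }⟩

noncomputable def normalEpiCategory_heart : IsNormalEpiCategory (ObjectProperty.FullSubcategory t.heart) := by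
  constructor
  intro P Q f hf
  haveI : Epi f := hf
  let fD : P.obj ⟶ Q.obj := f.hom
  have hepi : ∀ (W : D), t.heart W → ∀ d : Q.obj ⟶ W, fD ≫ d = 0 → d = 0 := by
    intro W hW d hd
    let W' : ObjectProperty.FullSubcategory t.heart := ⟨W, hW⟩
    let d' : Q ⟶ W' := ObjectProperty.homMk d
    have h2 : f ≫ d' = f ≫ 0 := by rw [comp_zero]; ext; exact hd
    exact congrArg InducedCategory.Hom.hom ((cancel_epi f).1 h2)
  have H := t.normalEpi_aux P.2 Q.2 fD hepi
  let Kk : ObjectProperty.FullSubcategory t.heart := ⟨H.choose, H.choose_spec.choose⟩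
  let k : Kk ⟶ P := ObjectProperty.homMk H.choose_spec.choose_spec.choose
  have hw : k ≫ f = 0 := by ext; exact H.choose_spec.choose_spec.choose_spec.1
  have huniv := H.choose_spec.choose_spec.choose_spec.2
  exact ⟨
    { W := Kk
      g := k
      w := hw
      isColimit := CokernelCofork.IsColimit.ofπ' f hw
        (fun {A} g hg =>
          ⟨ObjectProperty.homMk (huniv A.obj A.2 g.hom (congrArg InducedCategory.Hom.hom hg)).choose,
            by ext; exact (huniv A.obj A.2 g.hom (congrArg InducedCategory.Hom.hom hg)).choose_spec⟩) }⟩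

end AbelianConstruction

end PaperTStructure

/-- The heart of a t-structure on a triangulated category is abelian; moreover, for a
morphism `f : X ⟶ Y` in the heart with a distinguished triangle `F → X → Y → F[1]`
(so `F` is a fiber of `f`), the kernel of `f` in the heart is the truncation `τ_{≥0} F`
(the first object `K` of any truncation triangle `K → F → F' → K[1]` with `K ∈ D_{≥0}`,
`F' ∈ D_{<0}`), with kernel morphism the composite `K → F → X`, and the cokernel of `f`
is the truncation `τ_{<1}(F[1])` (the third object `Q` of any truncation triangle
`G → F[1] → Q → G[1]` with `G ∈ D_{≥1}`, `Q ∈ D_{<1}`), with cokernel morphism the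
composite `Y → F[1] → Q`; here the kernel and cokernel are expressed by their universal
properties in the heart. -/
theorem PaperTStructure.heart_abelian [IsTriangulated D] (t : PaperTStructure D) :
    Nonempty (Abelian (ObjectProperty.FullSubcategory t.heart)) ∧
    (∀ {X Y : D} (_ : t.heart X) (_ : t.heart Y) (f : X ⟶ Y)
      (F : D) (i : F ⟶ X) (c : Y ⟶ F⟦(1 : ℤ)⟧)
      (_ : Triangle.mk i f c ∈ distTriang D)
      -- a truncation triangle `τ_{≥0} F → F → τ_{<0} F`
      (K F' : D) (u : K ⟶ F) (v : F ⟶ F') (w : F' ⟶ K⟦(1 : ℤ)⟧)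
      (_ : t.ge K) (_ : t.lt F')
      (_ : Triangle.mk u v w ∈ distTriang D)
      -- a truncation triangle `τ_{≥1}(F[1]) → F[1] → τ_{<1}(F[1])`
      (G Q : D) (u' : G ⟶ F⟦(1 : ℤ)⟧) (v' : F⟦(1 : ℤ)⟧ ⟶ Q) (w' : Q ⟶ G⟦(1 : ℤ)⟧)
      (_ : t.geN 1 G) (_ : t.ltN 1 Q)
      (_ : Triangle.mk u' v' w' ∈ distTriang D),
      -- `K = τ_{≥0} F`, with `K → F → X`, is a kernel of `f` in the heart
      (t.heart K ∧ (u ≫ i) ≫ f = 0 ∧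
        ∀ (W : D), t.heart W → ∀ g : W ⟶ X, g ≫ f = 0 →
          ∃! h : W ⟶ K, h ≫ (u ≫ i) = g) ∧
      -- `Q = τ_{<1}(F[1])`, with `Y → F[1] → Q`, is a cokernel of `f` in the heart
      (t.heart Q ∧ f ≫ (c ≫ v') = 0 ∧
        ∀ (W : D), t.heart W → ∀ g : Y ⟶ W, f ≫ g = 0 →
          ∃! h : Q ⟶ W, (c ≫ v') ≫ h = g)) := by
  constructor
  · letI : HasZeroObject (ObjectProperty.FullSubcategory t.heart) := t.hasZeroObject_heart
    letI : HasBinaryBiproducts (ObjectProperty.FullSubcategory t.heart) := t.hasBinaryBiproducts_heart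
    letI : HasFiniteProducts (ObjectProperty.FullSubcategory t.heart) :=
      hasFiniteProducts_of_has_binary_and_terminal
    letI : HasKernels (ObjectProperty.FullSubcategory t.heart) := t.hasKernels_heart
    letI : HasCokernels (ObjectProperty.FullSubcategory t.heart) := t.hasCokernels_heart
    letI : IsNormalMonoCategory (ObjectProperty.FullSubcategory t.heart) := t.normalMonoCategory_heart
    letI : IsNormalEpiCategory (ObjectProperty.FullSubcategory t.heart) := t.normalEpiCategory_heart
    exact ⟨{ toPreadditive := inferInstance, toIsNormalMonoCategory := inferInstance,
             toIsNormalEpiCategory := inferInstance }⟩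
  · intro X Y hX hY f F i c hT K F' u v w hK hF' hT2 G Q u' v' w' hG hQ hT3
    exact ⟨t.kernel_spec hX hY f hT hK hF' hT2, t.cokernel_spec hX hY f hT hG hQ hT3⟩
end
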